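/- Existence of continuous selections staying in an excess-continuous prox-regular moving set: let r > 0 and C : [0,T] → closed r-prox-regular subsets of a real Hilbert space H satisfying: for all ε > 0 there is δ > 0 such that 0 ≤ t−s < δ implies e(C(s),C(t)) < ε. Then for every y₀ ∈ C(0) the catching-up approximants (right-continuous step functions y_n built by successive projections along nested subdivisions with mesh δ_n → 0 chosen so that e(C(s),C(t)) < ε_n whenever 0 ≤ t−s ≤ δ_n with ∑ε_n < ∞), if they satisfy sup_n V(y_n,[0,T]) < ∞, converge uniformly on [0,T] to a continuous function y of bounded variation with y(0)=y₀ and y(t) ∈ C(t) for all t ∈ [0,T]. -/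

import Mathlib

open Metric Set
open scoped RealInnerProductSpace

variable {H : Type*} [NormedAddCommGroup H] [InnerProductSpace ℝ H]

/-- The set of nearest points of `K` to `y`. -/
noncomputable def projSet (K : Set H) (y : H) : Set H :=
  {x | x ∈ K ∧ ‖x - y‖ = Metric.infDist y K}

/-- The proximal normal cone to `K` at `x`. -/
def proxNormalCone (K : Set H) (x : H) : Set H :=
  {u | ∃ l : ℝ, 0 ≤ l ∧ ∃ y : H, x ∈ projSet K y ∧ u = l • (y - x)}

/-- `K` is `r`-prox-regular. -/
def IsProxRegular (r : ℝ) (K : Set H) : Prop :=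
  ∀ y : H, 0 < Metric.infDist y K → Metric.infDist y K < r →
    (projSet K y).Nonempty ∧
      ∀ x ∈ projSet K y, x ∈ projSet K (x + (r / ‖y - x‖) • (y - x))

/-- The excess of `A` over `B`: `e(A,B) = sup_{a ∈ A} d(a,B)`. -/
noncomputable def excess (A B : Set H) : ENNReal := ⨆ a ∈ A, EMetric.infEdist a B


/-!
Fix `n ≤ m` with `ε n ≤ r / 4` and follow, along the nodes `t' k` of the finer subdivision, the
distance between the fine catching-up point `Y m k` and the coarse step function `y_n (t' k)`.
From one node to the next, `Y m` is projected onto `C (t' (k + 1))`, while `y_n` either stays put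
or (at a coarse node) is projected onto the same set; the coarse point is within `ε n` of that set
by the excess bound. Hypomonotonicity of the proximal normal cone of an `r`-prox-regular set turns
each step into `d² ↦ (d² + 3 ε_n c) · exp (4 (c + c') / r)`, where `c, c'` are the two jumps. A
discrete Grönwall argument, with both sums of jumps bounded by the variation bound `V`, gives
`‖y_m - y_n‖² ≤ 3 ε_n V exp (8 V / r)` on `[0, T]`, so `(y_n)` is uniformly Cauchy. The limit is
continuous because the jumps of `y_n` are below `ε n → 0`, lies in `C t` because
`d (y_n t, C t) < ε n`, and has variation at most `V` by lower semicontinuity of the variation.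
-/

open Filter Real
open scoped Topology

theorem infDist_lt_of_excess_lt {E : Type*} [NormedAddCommGroup E] {A B : Set E} {a : E}
    (ha : a ∈ A) {e : ℝ} (h : excess A B < ENNReal.ofReal e) : infDist a B < e :=
  ENNReal.toReal_lt_of_lt_ofReal
    ((le_iSup₂ (f := fun a (_ : a ∈ A) => infEDist a B) a ha).trans_lt h)

theorem le_mul_exp_of_mul_one_sub_le {a b x : ℝ} (ha : 0 ≤ a) (hx0 : 0 ≤ x) (hx : x ≤ 1 / 2)
    (h : a * (1 - x) ≤ b) : a ≤ b * exp (2 * x) := by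
  have hexp : 1 ≤ (1 - x) * exp (2 * x) := by
    nlinarith [add_one_le_exp (2 * x)]
  calc a ≤ a * ((1 - x) * exp (2 * x)) := le_mul_of_one_le_right ha hexp
    _ = a * (1 - x) * exp (2 * x) := by ring
    _ ≤ b * exp (2 * x) := mul_le_mul_of_nonneg_right h (exp_pos _).le

theorem le_mul_exp_sum_of_le_mul_exp {Φ a g : ℕ → ℝ} {N : ℕ} (ha : ∀ k < N, 0 ≤ a k)
    (hg : ∀ k < N, 0 ≤ g k) (h : ∀ k < N, Φ (k + 1) ≤ (Φ k + a k) * exp (g k)) :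
    ∀ k ≤ N, Φ k ≤ (Φ 0 + ∑ i ∈ Finset.range k, a i) * exp (∑ i ∈ Finset.range k, g i) := by
  intro k hk
  induction k with
  | zero => simp
  | succ k ih =>
    have hG : 1 ≤ exp (∑ i ∈ Finset.range k, g i) :=
      one_le_exp (Finset.sum_nonneg fun i hi => hg i (by simp at hi; omega))
    calc Φ (k + 1) ≤ (Φ k + a k) * exp (g k) := h k hk
      _ ≤ ((Φ 0 + ∑ i ∈ Finset.range k, a i) * exp (∑ i ∈ Finset.range k, g i)
            + a k * exp (∑ i ∈ Finset.range k, g i)) * exp (g k) :=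
          mul_le_mul_of_nonneg_right
            (add_le_add (ih (by omega)) (le_mul_of_one_le_right (ha k hk) hG)) (exp_pos _).le
      _ = _ := by rw [Finset.sum_range_succ, Finset.sum_range_succ, exp_add]; ring

namespace IsProxRegular

variable {r : ℝ} {K : Set H}

theorem inner_le_of_mem_projSet (hK : IsProxRegular r K) {u p w : H}
    (hp : p ∈ projSet K u) (hu : infDist u K < r) (hw : w ∈ K) :
    2 * r * ⟪u - p, w - p⟫ ≤ ‖p - u‖ * ‖w - p‖ ^ 2 := by
  rcases (infDist_nonneg (x := u) (s := K)).eq_or_lt with h0 | h0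
  · obtain rfl : p = u := by rw [← sub_eq_zero, ← norm_eq_zero, hp.2, ← h0]
    simp
  have hc : 0 < ‖u - p‖ := by rwa [norm_sub_rev, hp.2]
  set l := r / ‖u - p‖
  have hl : 0 < l := div_pos (h0.trans hu) hc
  -- `p` is also the projection of `p + l • (u - p)`, which lies at distance `r` along the normal
  have hfar := ((hK u h0 hu).2 p hp).2
  have hle : ‖l • (u - p)‖ ≤ ‖(w - p) - l • (u - p)‖ := by
    have := infDist_le_dist_of_mem (x := p + l • (u - p)) hw
    rwa [← hfar, dist_eq_norm', sub_add_cancel_left, norm_neg, sub_add_eq_sub_sub] at this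
  have hsq := pow_le_pow_left₀ (norm_nonneg _) hle 2
  rw [norm_sub_sq_real, real_inner_smul_right, real_inner_comm] at hsq
  have hcl : ‖u - p‖ * l = r := mul_div_cancel₀ r hc.ne'
  rw [norm_sub_rev]
  nlinarith

theorem norm_sub_sq_mul_le (hK : IsProxRegular r K) {u p q z : H} {e : ℝ}
    (hp : p ∈ projSet K u) (hu : infDist u K < r) (hz : z ∈ K) (hzq : ‖z - q‖ ≤ e)
    (he : e ≤ r / 2) :
    ‖p - q‖ ^ 2 * (r - 2 * ‖p - u‖) ≤ r * (‖u - q‖ ^ 2 + 3 * e * ‖p - u‖) := by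
  have hid : ‖p - q‖ ^ 2 = ‖u - q‖ ^ 2 - ‖p - u‖ ^ 2 + 2 * ⟪u - p, q - p⟫ := by
    have h1 : ⟪u - p, q - p⟫ = ‖u - p‖ ^ 2 - ⟪u - q, u - p⟫ := by
      rw [show q - p = (u - p) - (u - q) by abel, inner_sub_right, real_inner_self_eq_norm_sq,
        real_inner_comm]
    have h2 := norm_sub_sq_real (u - q) (u - p)
    rw [sub_sub_sub_cancel_left, norm_sub_rev u p] at h2
    rw [h1, norm_sub_rev u p, h2]
    ring
  have hsplit : ⟪u - p, q - p⟫ = ⟪u - p, q - z⟫ + ⟪u - p, z - p⟫ := by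
    rw [← inner_add_right, sub_add_sub_cancel]
  have hqz : ⟪u - p, q - z⟫ ≤ ‖p - u‖ * e := by
    calc ⟪u - p, q - z⟫ ≤ ‖u - p‖ * ‖q - z‖ := real_inner_le_norm _ _
      _ ≤ ‖p - u‖ * e := by
        rw [norm_sub_rev u, norm_sub_rev q]; exact mul_le_mul_of_nonneg_left hzq (norm_nonneg _)
  have hzp := hK.inner_le_of_mem_projSet hp hu hz
  have hzp' : ‖z - p‖ ≤ ‖p - q‖ + e := by
    have := norm_sub_le_norm_sub_add_norm_sub z q p
    rw [norm_sub_rev q p] at this; linarith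
  have hzp'' := pow_le_pow_left₀ (norm_nonneg _) hzp' 2
  have he0 : 0 ≤ e := (norm_nonneg _).trans hzq
  have hc := norm_nonneg (p - u)
  -- `r ‖p - q‖² ≤ r ‖u - q‖² + 2 r c e + c (‖p - q‖ + e)²` with `c = ‖p - u‖`; then
  -- `(‖p - q‖ + e)² ≤ 2 ‖p - q‖² + 2 e²` and `2 c e² ≤ r c e`
  nlinarith [mul_le_mul_of_nonneg_left hzp'' hc, mul_le_mul_of_nonneg_left he (mul_nonneg hc he0),
    sq_nonneg (‖p - q‖ - e), mul_nonneg hc (sq_nonneg (‖p - q‖ - e))]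

theorem norm_sub_sq_le_of_mem_projSet (hr : 0 < r) (hK : IsProxRegular r K) {u p q z : H}
    {e : ℝ} (hp : p ∈ projSet K u) (hpu : ‖p - u‖ ≤ r / 4) (hz : z ∈ K) (hzq : ‖z - q‖ ≤ e)
    (he : e ≤ r / 2) :
    ‖p - q‖ ^ 2 ≤ (‖u - q‖ ^ 2 + 3 * e * ‖p - u‖) * exp (4 * ‖p - u‖ / r) := by
  have hu : infDist u K < r := by rw [← hp.2]; linarith
  have h := hK.norm_sub_sq_mul_le hp hu hz hzq he
  rw [show 4 * ‖p - u‖ / r = 2 * (2 * ‖p - u‖ / r) by ring]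
  refine le_mul_exp_of_mul_one_sub_le (sq_nonneg _) (by positivity) ?_ ?_
  · rw [div_le_iff₀ hr]; linarith
  · rw [one_sub_div hr.ne', mul_div_assoc', div_le_iff₀ hr, mul_comm _ r]; exact h

theorem norm_sub_sq_le_of_eq_or_mem_projSet (hr : 0 < r) (hK : IsProxRegular r K) {p q q' : H}
    (hp : p ∈ K) (hq' : q' = q ∨ q' ∈ projSet K q) (hq : infDist q K ≤ r / 4) :
    ‖p - q'‖ ^ 2 ≤ ‖p - q‖ ^ 2 * exp (4 * ‖q' - q‖ / r) := by
  rcases hq' with rfl | hq'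
  · simp
  have h := hK.norm_sub_sq_le_of_mem_projSet hr hq' (hq'.2.trans_le hq) hp
    (by rw [sub_self, norm_zero]) (by positivity)
  rwa [mul_zero, zero_mul, add_zero, norm_sub_rev q', norm_sub_rev q] at h

end IsProxRegular

theorem norm_sub_sq_le_of_catchingUp {r e : ℝ} (hr : 0 < r) (he : e ≤ r / 4) {K : ℕ → Set H}
    {u q : ℕ → H} {N : ℕ} (hK : ∀ k < N, IsProxRegular r (K k))
    (hu : ∀ k < N, u (k + 1) ∈ projSet (K k) (u k)) (hu_le : ∀ k < N, ‖u (k + 1) - u k‖ ≤ r / 4)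
    (hq : ∀ k < N, infDist (q k) (K k) < e)
    (hq' : ∀ k < N, q (k + 1) = q k ∨ q (k + 1) ∈ projSet (K k) (q k)) :
    ∀ k ≤ N, ‖u k - q k‖ ^ 2 ≤ (‖u 0 - q 0‖ ^ 2 + ∑ i ∈ Finset.range k, 3 * e * ‖u (i + 1) - u i‖) *
      exp (∑ i ∈ Finset.range k, 4 / r * (‖u (i + 1) - u i‖ + ‖q (i + 1) - q i‖)) := by
  refine le_mul_exp_sum_of_le_mul_exp (fun k hk => ?_) (fun _ _ => by positivity) fun k hk => ?_
  · have := (infDist_nonneg.trans_lt (hq k hk)).le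
    positivity
  obtain ⟨z, hz, hzq⟩ := (infDist_lt_iff ⟨_, (hu k hk).1⟩).1 (hq k hk)
  have hA := (hK k hk).norm_sub_sq_le_of_mem_projSet (q := q k) (e := e) hr (hu k hk)
    (hu_le k hk) hz (by rw [← dist_eq_norm, dist_comm]; exact hzq.le) (by linarith)
  have hB := (hK k hk).norm_sub_sq_le_of_eq_or_mem_projSet hr (hu k hk).1 (hq' k hk)
    ((hq k hk).le.trans he)
  calc ‖u (k + 1) - q (k + 1)‖ ^ 2
      ≤ (‖u k - q k‖ ^ 2 + 3 * e * ‖u (k + 1) - u k‖) * exp (4 * ‖u (k + 1) - u k‖ / r) *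
          exp (4 * ‖q (k + 1) - q k‖ / r) :=
        hB.trans (mul_le_mul_of_nonneg_right hA (exp_pos _).le)
    _ = _ := by rw [mul_assoc, ← exp_add]; ring_nf

structure IsSubdivision (T : ℝ) (J : ℕ) (t : ℕ → ℝ) : Prop where
  zero : t 0 = 0
  last : t J = T
  lt_succ : ∀ j < J, t j < t (j + 1)

namespace IsSubdivision

variable {T : ℝ} {J J' : ℕ} {t t' : ℕ → ℝ}

theorem strictMonoOn (ht : IsSubdivision T J t) : StrictMonoOn t (Iic J) :=
  strictMonoOn_Iic_of_lt_succ fun j hj => by rw [Order.succ_eq_add_one]; exact ht.lt_succ j hj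

theorem mem_Icc (ht : IsSubdivision T J t) {j : ℕ} (hj : j ≤ J) : t j ∈ Icc 0 T :=
  ⟨ht.zero ▸ ht.strictMonoOn.monotoneOn (Nat.zero_le J) hj (Nat.zero_le j),
    ht.last ▸ ht.strictMonoOn.monotoneOn hj (le_refl J) hj⟩

theorem exists_mem_Ico (ht : IsSubdivision T J t) {s : ℝ} (hs : s ∈ Ico 0 T) :
    ∃ j < J, s ∈ Ico (t j) (t (j + 1)) := by
  have hex : ∃ k, s < t k := ⟨J, ht.last ▸ hs.2⟩
  have hJ : Nat.find hex ≤ J := Nat.find_min' hex (ht.last ▸ hs.2)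
  have h0 : Nat.find hex ≠ 0 := fun h0 => by
    have := Nat.find_spec hex
    rw [h0, ht.zero] at this
    exact this.not_ge hs.1
  obtain ⟨j, hj⟩ := Nat.exists_eq_add_one_of_ne_zero h0
  exact ⟨j, by omega, not_lt.1 (Nat.find_min hex (by omega)), hj ▸ Nat.find_spec hex⟩

theorem exists_mem_Ioc (ht : IsSubdivision T J t) {s : ℝ} (hs : s ∈ Ioc 0 T) :
    ∃ j < J, s ∈ Ioc (t j) (t (j + 1)) := by
  have hex : ∃ k, s ≤ t k := ⟨J, ht.last ▸ hs.2⟩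
  have hJ : Nat.find hex ≤ J := Nat.find_min' hex (ht.last ▸ hs.2)
  have h0 : Nat.find hex ≠ 0 := fun h0 => by
    have := Nat.find_spec hex
    rw [h0, ht.zero] at this
    exact this.not_gt hs.1
  obtain ⟨j, hj⟩ := Nat.exists_eq_add_one_of_ne_zero h0
  exact ⟨j, by omega, not_le.1 (Nat.find_min hex (by omega)), hj ▸ Nat.find_spec hex⟩

theorem exists_cell_subset (ht : IsSubdivision T J t) (ht' : IsSubdivision T J' t')
    (href : t '' Iic J ⊆ t' '' Iic J') {k : ℕ} (hk : k < J') :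
    ∃ j < J, t j ≤ t' k ∧ t' (k + 1) ≤ t (j + 1) := by
  obtain ⟨j, hj, hkj⟩ := ht.exists_mem_Ico
    ⟨(ht'.mem_Icc hk.le).1, (ht'.lt_succ k hk).trans_le (ht'.mem_Icc hk).2⟩
  obtain ⟨k', hk', hk'j⟩ := href ⟨j + 1, hj, rfl⟩
  have hkk' : k < k' := (ht'.strictMonoOn.lt_iff_lt hk.le hk').1 (hk'j ▸ hkj.2)
  exact ⟨j, hj, hkj.1, hk'j ▸ ht'.strictMonoOn.monotoneOn hk hk' hkk'⟩

end IsSubdivision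

section NormedGroup

variable {E : Type*} [NormedAddCommGroup E]

def CellExcessLt (C : ℝ → Set E) (J : ℕ) (t : ℕ → ℝ) (e : ℝ) : Prop :=
  ∀ j < J, ∀ s ∈ Icc (t j) (t (j + 1)), excess (C (t j)) (C s) < ENNReal.ofReal e

structure IsCatchingUp (C : ℝ → Set E) (J : ℕ) (t : ℕ → ℝ) (Y : ℕ → E) : Prop where
  mem_zero : Y 0 ∈ C (t 0)
  mem_projSet : ∀ j < J, Y (j + 1) ∈ projSet (C (t (j + 1))) (Y j)

structure IsStepInterpolant {α : Type*} (J : ℕ) (t : ℕ → ℝ) (Y : ℕ → α) (f : ℝ → α) : Prop where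
  eq_of_mem_Ico : ∀ j < J, ∀ s ∈ Ico (t j) (t (j + 1)), f s = Y j
  eq_last : f (t J) = Y J

variable {C : ℝ → Set E} {T e : ℝ} {J J' : ℕ} {t t' : ℕ → ℝ} {Y : ℕ → E}

theorem IsCatchingUp.mem (hY : IsCatchingUp C J t Y) : ∀ j ≤ J, Y j ∈ C (t j)
  | 0, _ => hY.mem_zero
  | j + 1, hj => (hY.mem_projSet j hj).1

theorem IsCatchingUp.norm_sub_lt (hY : IsCatchingUp C J t Y) (ht : IsSubdivision T J t)
    (hC : CellExcessLt C J t e) {j : ℕ} (hj : j < J) : ‖Y (j + 1) - Y j‖ < e := by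
  rw [(hY.mem_projSet j hj).2]
  exact infDist_lt_of_excess_lt (hY.mem j hj.le) (hC j hj _ ⟨(ht.lt_succ j hj).le, le_rfl⟩)

namespace IsStepInterpolant

section

variable {α : Type*} {Y : ℕ → α} {f : ℝ → α}

theorem apply_node (hf : IsStepInterpolant J t Y f) (ht : IsSubdivision T J t) {j : ℕ}
    (hj : j ≤ J) : f (t j) = Y j := by
  rcases hj.lt_or_eq with hj | rfl
  · exact hf.eq_of_mem_Ico j hj _ ⟨le_rfl, ht.lt_succ j hj⟩
  · exact hf.eq_last

theorem apply_eq_of_mem_Ico_refinement (hf : IsStepInterpolant J t Y f)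
    (ht : IsSubdivision T J t) (ht' : IsSubdivision T J' t') (href : t '' Iic J ⊆ t' '' Iic J')
    {k : ℕ} (hk : k < J') {s : ℝ} (hs : s ∈ Ico (t' k) (t' (k + 1))) : f s = f (t' k) := by
  obtain ⟨j, hj, hjk, hkj⟩ := ht.exists_cell_subset ht' href hk
  rw [hf.eq_of_mem_Ico j hj s ⟨hjk.trans hs.1, hs.2.trans_le hkj⟩,
    hf.eq_of_mem_Ico j hj _ ⟨hjk, (ht'.lt_succ k hk).trans_le hkj⟩]

theorem eventually_dist_le [PseudoMetricSpace α] (hf : IsStepInterpolant J t Y f)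
    (ht : IsSubdivision T J t) (he : 0 ≤ e) (hY : ∀ j < J, dist (Y (j + 1)) (Y j) ≤ e)
    {s : ℝ} (hs : s ∈ Icc 0 T) : ∀ᶠ s' in 𝓝[Icc 0 T] s, dist (f s') (f s) ≤ e := by
  rw [eventually_nhdsWithin_iff, ← nhdsLT_sup_nhdsGE, eventually_sup]
  constructor
  · rcases hs.1.eq_or_lt with rfl | hs0
    · filter_upwards [self_mem_nhdsWithin] with s' hs' hs'I using absurd hs'I.1 (not_le.2 hs')
    obtain ⟨j, hj, hsj⟩ := ht.exists_mem_Ioc ⟨hs0, hs.2⟩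
    filter_upwards [Ioo_mem_nhdsLT hsj.1] with s' hs' _
    rw [hf.eq_of_mem_Ico j hj s' ⟨hs'.1.le, hs'.2.trans_le hsj.2⟩]
    rcases hsj.2.lt_or_eq with hsj' | rfl
    · rw [hf.eq_of_mem_Ico j hj s ⟨hsj.1.le, hsj'⟩, dist_self]; exact he
    · rw [hf.apply_node ht hj, dist_comm]; exact hY j hj
  · rcases hs.2.lt_or_eq with hsT | rfl
    · obtain ⟨j, hj, hsj⟩ := ht.exists_mem_Ico ⟨hs.1, hsT⟩
      filter_upwards [Ico_mem_nhdsGE_of_mem hsj] with s' hs' _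
      rw [hf.eq_of_mem_Ico j hj s' hs', hf.eq_of_mem_Ico j hj s hsj, dist_self]; exact he
    · filter_upwards [self_mem_nhdsWithin] with s' hs' hs'I
      rw [le_antisymm hs'I.2 hs', dist_self]; exact he

end

variable {f : ℝ → E}

theorem infDist_lt (hf : IsStepInterpolant J t Y f) (hY : IsCatchingUp C J t Y)
    (hC : CellExcessLt C J t e) {j : ℕ} (hj : j < J) {a b : ℝ} (ha : a ∈ Ico (t j) (t (j + 1)))
    (hb : b ∈ Icc (t j) (t (j + 1))) : infDist (f a) (C b) < e := by
  rw [hf.eq_of_mem_Ico j hj a ha]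
  exact infDist_lt_of_excess_lt (hY.mem j hj.le) (hC j hj b hb)

theorem eq_or_mem_projSet (hf : IsStepInterpolant J t Y f) (hY : IsCatchingUp C J t Y)
    (ht : IsSubdivision T J t) {j : ℕ} (hj : j < J) {a b : ℝ} (ha : a ∈ Ico (t j) (t (j + 1)))
    (hb : b ∈ Icc (t j) (t (j + 1))) : f b = f a ∨ f b ∈ projSet (C b) (f a) := by
  rw [hf.eq_of_mem_Ico j hj a ha]
  rcases hb.2.lt_or_eq with hb' | rfl
  · exact .inl (hf.eq_of_mem_Ico j hj b ⟨hb.1, hb'⟩)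
  · exact .inr (hf.apply_node ht hj ▸ hY.mem_projSet j hj)

theorem infDist_apply_lt (hf : IsStepInterpolant J t Y f) (hY : IsCatchingUp C J t Y)
    (ht : IsSubdivision T J t) (hC : CellExcessLt C J t e) (he : 0 < e) {s : ℝ}
    (hs : s ∈ Icc 0 T) : infDist (f s) (C s) < e := by
  rcases hs.2.lt_or_eq with hsT | rfl
  · obtain ⟨j, hj, hsj⟩ := ht.exists_mem_Ico ⟨hs.1, hsT⟩
    exact hf.infDist_lt hY hC hj hsj (Ico_subset_Icc_self hsj)
  · rw [← ht.last, hf.eq_last, infDist_zero_of_mem (hY.mem J le_rfl)]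
    exact he

end IsStepInterpolant

end NormedGroup

theorem sum_norm_sub_le_of_eVariationOn_le {α E : Type*} [LinearOrder α]
    [SeminormedAddCommGroup E] {f : α → E} {s : Set α} {u : ℕ → α} {k : ℕ} {V : ℝ} (hV0 : 0 ≤ V)
    (hu : MonotoneOn u (Icc 0 k)) (us : ∀ i ∈ Icc 0 k, u i ∈ s)
    (hV : eVariationOn f s ≤ ENNReal.ofReal V) :
    ∑ i ∈ Finset.range k, ‖f (u (i + 1)) - f (u i)‖ ≤ V := by
  rw [← ENNReal.ofReal_le_ofReal_iff hV0,
    ENNReal.ofReal_sum_of_nonneg fun _ _ => norm_nonneg _, Finset.range_eq_Ico]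
  refine le_trans (le_of_eq ?_) ((eVariationOn.sum_le_of_monotoneOn_Icc hu us).trans hV)
  simp only [edist_dist, dist_eq_norm]

theorem IsSubdivision.sum_norm_sub_le {E : Type*} [SeminormedAddCommGroup E] {T V : ℝ} {J k : ℕ}
    {t : ℕ → ℝ} {f : ℝ → E} (ht : IsSubdivision T J t) (hk : k ≤ J) (hV0 : 0 ≤ V)
    (hV : eVariationOn f (Icc 0 T) ≤ ENNReal.ofReal V) :
    ∑ i ∈ Finset.range k, ‖f (t (i + 1)) - f (t i)‖ ≤ V :=
  sum_norm_sub_le_of_eVariationOn_le hV0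
    (ht.strictMonoOn.monotoneOn.mono fun _ hi => hi.2.trans hk)
    (fun _ hi => ht.mem_Icc (hi.2.trans hk)) hV

theorem IsStepInterpolant.norm_sub_sq_le_of_refinement {C : ℝ → Set H} {T r e V : ℝ}
    {J J' : ℕ} {t t' : ℕ → ℝ} {Y Y' : ℕ → H} {f f' : ℝ → H} (hr : 0 < r) (he : 0 < e)
    (her : e ≤ r / 4) (hV : 0 ≤ V) (hC : ∀ s ∈ Icc 0 T, IsProxRegular r (C s))
    (ht : IsSubdivision T J t) (hY : IsCatchingUp C J t Y) (hf : IsStepInterpolant J t Y f)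
    (hCt : CellExcessLt C J t e) (hfV : eVariationOn f (Icc 0 T) ≤ ENNReal.ofReal V)
    (ht' : IsSubdivision T J' t') (hY' : IsCatchingUp C J' t' Y')
    (hf' : IsStepInterpolant J' t' Y' f') (hY'r : ∀ k < J', ‖Y' (k + 1) - Y' k‖ ≤ r / 4)
    (hf'V : eVariationOn f' (Icc 0 T) ≤ ENNReal.ofReal V) (href : t '' Iic J ⊆ t' '' Iic J')
    (h0 : Y' 0 = Y 0) {s : ℝ} (hs : s ∈ Icc 0 T) :
    ‖f' s - f s‖ ^ 2 ≤ 3 * e * V * exp (8 * V / r) := by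
  have hcell : ∀ k < J', ∃ j < J,
      t' k ∈ Ico (t j) (t (j + 1)) ∧ t' (k + 1) ∈ Icc (t j) (t (j + 1)) := fun k hk => by
    obtain ⟨j, hj, hjk, hkj⟩ := ht.exists_cell_subset ht' href hk
    exact ⟨j, hj, ⟨hjk, (ht'.lt_succ k hk).trans_le hkj⟩,
      ⟨hjk.trans (ht'.lt_succ k hk).le, hkj⟩⟩
  have hnode : ∀ k ≤ J', ‖Y' k - f (t' k)‖ ^ 2 ≤ 3 * e * V * exp (8 * V / r) := by
    intro k hk
    refine (norm_sub_sq_le_of_catchingUp (K := fun k => C (t' (k + 1))) (q := fun k => f (t' k))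
      hr her (fun k hk => hC _ (ht'.mem_Icc hk)) hY'.mem_projSet hY'r
      (fun k hk => ?_) (fun k hk => ?_) k hk).trans ?_
    · obtain ⟨j, hj, hkj, hk'j⟩ := hcell k hk
      exact hf.infDist_lt hY hCt hj hkj hk'j
    · obtain ⟨j, hj, hkj, hk'j⟩ := hcell k hk
      exact hf.eq_or_mem_projSet hY ht hj hkj hk'j
    have hc : ∑ i ∈ Finset.range k, ‖Y' (i + 1) - Y' i‖ ≤ V := by
      refine le_of_eq_of_le (Finset.sum_congr rfl fun i hi => ?_) (ht'.sum_norm_sub_le hk hV hf'V)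
      rw [Finset.mem_range] at hi
      rw [hf'.apply_node ht' (by omega), hf'.apply_node ht' (by omega)]
    have hd := ht'.sum_norm_sub_le hk hV hfV
    rw [ht'.zero, ← ht.zero, hf.apply_node ht (Nat.zero_le J), h0, sub_self, norm_zero,
      ← Finset.mul_sum, ← Finset.mul_sum, Finset.sum_add_distrib]
    calc (0 ^ 2 + 3 * e * ∑ i ∈ Finset.range k, ‖Y' (i + 1) - Y' i‖) *
          exp (4 / r * (∑ i ∈ Finset.range k, ‖Y' (i + 1) - Y' i‖ +
            ∑ i ∈ Finset.range k, ‖f (t' (i + 1)) - f (t' i)‖))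
        ≤ (0 ^ 2 + 3 * e * V) * exp (4 / r * (V + V)) := by gcongr
      _ = 3 * e * V * exp (8 * V / r) := by ring_nf
  rcases hs.2.lt_or_eq with hsT | rfl
  · obtain ⟨k, hk, hsk⟩ := ht'.exists_mem_Ico ⟨hs.1, hsT⟩
    rw [hf'.eq_of_mem_Ico k hk s hsk, hf.apply_eq_of_mem_Ico_refinement ht ht' href hk hsk]
    exact hnode k hk.le
  · rw [← ht'.last, hf'.eq_last]
    exact hnode J' le_rfl

section Limits

variable {α β : Type*} [PseudoMetricSpace β]

theorem exists_tendstoUniformlyOn_of_dist_le [CompleteSpace β] [Nonempty β] {F : ℕ → α → β}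
    {s : Set α} {b : ℕ → ℝ} (hb : Tendsto b atTop (𝓝 0))
    (hF : ∀ᶠ n in atTop, ∀ m ≥ n, ∀ x ∈ s, dist (F m x) (F n x) ≤ b n) :
    ∃ f, TendstoUniformlyOn F f atTop s := by
  have hU : UniformCauchySeqOn F atTop s := by
    rw [Metric.uniformCauchySeqOn_iff]
    intro δ hδ
    obtain ⟨n, hn, hbn⟩ := (hF.and (hb.eventually (gt_mem_nhds (half_pos hδ)))).exists
    refine ⟨n, fun m hm m' hm' x hx => ?_⟩
    calc dist (F m x) (F m' x) ≤ dist (F m x) (F n x) + dist (F m' x) (F n x) :=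
          dist_triangle_right _ _ _
      _ ≤ b n + b n := add_le_add (hn m hm x hx) (hn m' hm' x hx)
      _ < δ := by linarith
  exact ⟨fun x => limUnder atTop fun n => F n x,
    hU.tendstoUniformlyOn_of_tendsto fun x hx => (hU.cauchySeq hx).tendsto_limUnder⟩

theorem TendstoUniformlyOn.continuousOn_of_eventually_dist_le [TopologicalSpace α]
    {F : ℕ → α → β} {f : α → β} {s : Set α} {e : ℕ → ℝ} (hF : TendstoUniformlyOn F f atTop s)
    (he : Tendsto e atTop (𝓝 0))
    (hloc : ∀ n, ∀ x ∈ s, ∀ᶠ x' in 𝓝[s] x, dist (F n x') (F n x) ≤ e n) :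
    ContinuousOn f s := by
  intro x hx
  rw [ContinuousWithinAt, Metric.tendsto_nhds]
  intro δ hδ
  obtain ⟨n, hn, hen⟩ := ((Metric.tendstoUniformlyOn_iff.1 hF (δ / 3) (by positivity)).and
    (he.eventually (gt_mem_nhds (by positivity : (0 : ℝ) < δ / 3)))).exists
  filter_upwards [hloc n x hx, self_mem_nhdsWithin] with x' hx' hx's
  calc dist (f x') (f x) ≤ dist (f x') (F n x') + dist (F n x') (F n x) + dist (F n x) (f x) :=
        dist_triangle4 _ _ _ _
    _ < δ / 3 + δ / 3 + δ / 3 := by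
        gcongr
        · exact hn x' hx's
        · exact hx'.trans_lt hen
        · rw [dist_comm]; exact hn x hx
    _ = δ := by ring

theorem IsClosed.mem_of_tendsto_of_infDist_le {K : Set β} (hK : IsClosed K) (hne : K.Nonempty)
    {u : ℕ → β} {x : β} {e : ℕ → ℝ} (hu : Tendsto u atTop (𝓝 x)) (he : Tendsto e atTop (𝓝 0))
    (hue : ∀ n, infDist (u n) K ≤ e n) : x ∈ K := by
  rw [hK.mem_iff_infDist_zero hne]
  exact le_antisymm (le_of_tendsto_of_tendsto ((continuous_infDist_pt K).tendsto x |>.comp hu) he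
    (Eventually.of_forall hue)) infDist_nonneg

end Limits

theorem eVariationOn_le_of_tendsto {α E ι : Type*} [LinearOrder α] [PseudoEMetricSpace E]
    {F : ι → α → E} {p : Filter ι} [p.NeBot] {f : α → E} {s : Set α} {v : ENNReal}
    (hF : ∀ x ∈ s, Tendsto (fun i => F i x) p (𝓝 (f x))) (hv : ∀ i, eVariationOn (F i) s ≤ v) :
    eVariationOn f s ≤ v :=
  le_of_not_gt fun h =>
    (eVariationOn.lowerSemicontinuous_aux hF h).exists.elim fun i hi => (hv i).not_gt hi

section CatchingUp

variable {C : ℝ → Set H} {r T V : ℝ} {y₀ : H} {ε : ℕ → ℝ} {J : ℕ → ℕ}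
  {t : ℕ → ℕ → ℝ} {Y : ℕ → ℕ → H} {f : ℕ → ℝ → H}

theorem eventually_dist_catchingUp_le (hr : 0 < r) (hC : ∀ s ∈ Icc 0 T, IsProxRegular r (C s))
    (hε : ∀ n, 0 < ε n) (hε0 : Tendsto ε atTop (𝓝 0)) (ht : ∀ n, IsSubdivision T (J n) (t n))
    (href : Monotone fun n => t n '' Iic (J n)) (hY : ∀ n, IsCatchingUp C (J n) (t n) (Y n))
    (hY0 : ∀ n, Y n 0 = y₀) (hf : ∀ n, IsStepInterpolant (J n) (t n) (Y n) (f n))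
    (hCt : ∀ n, CellExcessLt C (J n) (t n) (ε n)) (hV0 : 0 ≤ V)
    (hV : ∀ n, eVariationOn (f n) (Icc 0 T) ≤ ENNReal.ofReal V) :
    ∀ᶠ n in atTop, ∀ m ≥ n, ∀ s ∈ Icc 0 T,
      dist (f m s) (f n s) ≤ √(3 * ε n * V * exp (8 * V / r)) := by
  obtain ⟨N, hN⟩ := eventually_atTop.1 (hε0.eventually (ge_mem_nhds (by positivity : 0 < r / 4)))
  filter_upwards [eventually_ge_atTop N] with n hn m hm s hs
  have hjump : ∀ k < J m, ‖Y m (k + 1) - Y m k‖ ≤ r / 4 := fun k hk =>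
    ((hY m).norm_sub_lt (ht m) (hCt m) hk).le.trans (hN m (hn.trans hm))
  rw [dist_eq_norm, Real.le_sqrt (norm_nonneg _) (by have := hε n; positivity)]
  exact (hf n).norm_sub_sq_le_of_refinement hr (hε n) (hN n hn) hV0 hC (ht n) (hY n)
    (hCt n) (hV n) (ht m) (hY m) (hf m) hjump (hV m) (href hm) (by rw [hY0, hY0]) hs

theorem exists_tendstoUniformlyOn_catchingUp [CompleteSpace H] (hr : 0 < r)
    (hC : ∀ s ∈ Icc 0 T, IsClosed (C s) ∧ (C s).Nonempty ∧ IsProxRegular r (C s))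
    (hε : ∀ n, 0 < ε n) (hε0 : Tendsto ε atTop (𝓝 0)) (ht : ∀ n, IsSubdivision T (J n) (t n))
    (href : Monotone fun n => t n '' Iic (J n)) (hY : ∀ n, IsCatchingUp C (J n) (t n) (Y n))
    (hY0 : ∀ n, Y n 0 = y₀) (hf : ∀ n, IsStepInterpolant (J n) (t n) (Y n) (f n))
    (hCt : ∀ n, CellExcessLt C (J n) (t n) (ε n)) (hV0 : 0 ≤ V)
    (hV : ∀ n, eVariationOn (f n) (Icc 0 T) ≤ ENNReal.ofReal V) :
    ∃ y, TendstoUniformlyOn f y atTop (Icc 0 T) ∧ ContinuousOn y (Icc 0 T) ∧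
      BoundedVariationOn y (Icc 0 T) ∧ y 0 = y₀ ∧ ∀ s ∈ Icc 0 T, y s ∈ C s := by
  have hb : Tendsto (fun n => √(3 * ε n * V * exp (8 * V / r))) atTop (𝓝 0) := by
    simpa using (((hε0.const_mul 3).mul_const V).mul_const (exp (8 * V / r))).sqrt
  obtain ⟨y, hy⟩ := exists_tendstoUniformlyOn_of_dist_le hb <|
    eventually_dist_catchingUp_le hr (fun s hs => (hC s hs).2.2) hε hε0 ht href hY hY0 hf hCt hV0 hV
  have hjump : ∀ n, ∀ j < J n, dist (Y n (j + 1)) (Y n j) ≤ ε n := fun n j hj => by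
    rw [dist_eq_norm]; exact ((hY n).norm_sub_lt (ht n) (hCt n) hj).le
  have h0 : (0 : ℝ) ∈ Icc 0 T := (ht 0).zero ▸ (ht 0).mem_Icc (Nat.zero_le _)
  refine ⟨y, hy, ?_, ?_, ?_, fun s hs => ?_⟩
  · exact hy.continuousOn_of_eventually_dist_le hε0 fun n s hs =>
      (hf n).eventually_dist_le (ht n) (hε n).le (hjump n) hs
  · exact ne_top_of_le_ne_top ENNReal.ofReal_ne_top
      (eVariationOn_le_of_tendsto (fun s hs => hy.tendsto_at hs) hV)
  · refine tendsto_nhds_unique (hy.tendsto_at h0) ?_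
    refine (tendsto_congr fun n => ?_).2 tendsto_const_nhds
    rw [← (ht n).zero, (hf n).apply_node (ht n) (Nat.zero_le _), hY0]
  · exact (hC s hs).1.mem_of_tendsto_of_infDist_le (hC s hs).2.1 (hy.tendsto_at hs) hε0
      fun n => ((hf n).infDist_apply_lt (hY n) (ht n) (hCt n) (hε n) hs).le

end CatchingUp

theorem stmt_16_general [CompleteSpace H] (r T : ℝ)
    (C : ℝ → Set H)
    (hC : ∀ t ∈ Set.Icc (0 : ℝ) T,
      IsClosed (C t) ∧ (C t).Nonempty ∧ IsProxRegular r (C t))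
    (y₀ : H) (hy₀ : y₀ ∈ C 0)
    -- sequences `ε_n`, `δ_n`
    (ε δ : ℕ → ℝ)
    (hε : ∀ n, 0 < ε (n + 1) ∧ ε (n + 1) < ε n ∧ ε n < r)
    (hεsum : Summable ε)
    (hδε : ∀ n, ∀ s t : ℝ, 0 ≤ s → s ≤ t → t ≤ T → t - s ≤ δ n →
      excess (C s) (C t) < ENNReal.ofReal (ε n))
    -- nested subdivisions `0 = t^n_0 < … < t^n_{J n} = T` with mesh `≤ δ n`
    (J : ℕ → ℕ)
    (t : ℕ → ℕ → ℝ)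
    (ht0 : ∀ n, t n 0 = 0) (htJ : ∀ n, t n (J n) = T)
    (htmono : ∀ n, ∀ j < J n, t n j < t n (j + 1))
    (htmesh : ∀ n, ∀ j < J n, t n (j + 1) - t n j ≤ δ n)
    (hnested : ∀ n, ∀ j ≤ J n, ∃ k ≤ J (n + 1), t (n + 1) k = t n j)
    -- the catching-up points `y^n_j`
    (Y : ℕ → ℕ → H) (hY0 : ∀ n, Y n 0 = y₀)
    (hYproj : ∀ n, ∀ j : ℕ, 1 ≤ j → j ≤ J n →
      Y n j ∈ projSet (C (t n j)) (Y n (j - 1)))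
    -- the right-continuous piecewise-constant interpolants `y_n`
    (yn : ℕ → ℝ → H)
    (hynstep : ∀ n, ∀ j : ℕ, 1 ≤ j → j ≤ J n →
      ∀ s ∈ Set.Ico (t n (j - 1)) (t n j), yn n s = Y n (j - 1))
    (hynT : ∀ n, yn n T = Y n (J n))
    -- uniformly bounded variations
    (hVar : ∃ V : ℝ, ∀ n, eVariationOn (yn n) (Set.Icc 0 T) ≤ ENNReal.ofReal V) :
    ∃ y : ℝ → H, ContinuousOn y (Set.Icc 0 T) ∧
      BoundedVariationOn y (Set.Icc 0 T) ∧ y 0 = y₀ ∧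
      (∀ s ∈ Set.Icc (0 : ℝ) T, y s ∈ C s) ∧
      TendstoUniformlyOn yn y Filter.atTop (Set.Icc 0 T) := by
  have ht n : IsSubdivision T (J n) (t n) := ⟨ht0 n, htJ n, htmono n⟩
  have hY n : IsCatchingUp C (J n) (t n) (Y n) :=
    ⟨by rw [ht0, hY0]; exact hy₀, fun j hj => by simpa using hYproj n (j + 1) (by omega) hj⟩
  have hf n : IsStepInterpolant (J n) (t n) (Y n) (yn n) :=
    ⟨fun j hj s hs => by simpa using hynstep n (j + 1) (by omega) hj s (by simpa using hs),
      by rw [htJ]; exact hynT n⟩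
  have hCt n : CellExcessLt C (J n) (t n) (ε n) := fun j hj s hs =>
    hδε n _ _ ((ht n).mem_Icc hj.le).1 hs.1 (hs.2.trans ((ht n).mem_Icc hj).2)
      (by linarith [htmesh n j hj, hs.2])
  have href : Monotone fun n => t n '' Iic (J n) := monotone_nat_of_le_succ fun n => by
    rintro _ ⟨j, hj, rfl⟩
    exact hnested n j hj
  obtain ⟨V, hV⟩ := hVar
  obtain ⟨y, hy, hcont, hBV, hy0, hmem⟩ := exists_tendstoUniformlyOn_catchingUp
    ((hε 0).1.trans ((hε 0).2.1.trans (hε 0).2.2)) hC (fun n => (hε n).1.trans (hε n).2.1)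
    hεsum.tendsto_atTop_zero ht href hY hY0 hf hCt (le_max_right V 0)
    fun n => (hV n).trans (ENNReal.ofReal_le_ofReal (le_max_left V 0))
  exact ⟨y, hcont, hBV, hy0, hmem, hy⟩

theorem stmt_16 [CompleteSpace H] (r T : ℝ) (hr : 0 < r) (hT : 0 < T)
    (C : ℝ → Set H)
    (hC : ∀ t ∈ Set.Icc (0 : ℝ) T,
      IsClosed (C t) ∧ (C t).Nonempty ∧ IsProxRegular r (C t))
    -- excess-continuity of the moving set
    (hcont : ∀ ε : ℝ, 0 < ε → ∃ δ : ℝ, 0 < δ ∧ ∀ s t : ℝ, 0 ≤ s → s ≤ t →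
      t ≤ T → t - s < δ → excess (C s) (C t) < ENNReal.ofReal ε)
    (y₀ : H) (hy₀ : y₀ ∈ C 0)
    -- sequences `ε_n`, `δ_n`
    (ε δ : ℕ → ℝ)
    (hε : ∀ n, 0 < ε (n + 1) ∧ ε (n + 1) < ε n ∧ ε n < r)
    (hεsum : Summable ε)
    (hδpos : ∀ n, 0 < δ (n + 1) ∧ δ (n + 1) < δ n)
    (hδ0 : Filter.Tendsto δ Filter.atTop (nhds 0))
    (hδε : ∀ n, ∀ s t : ℝ, 0 ≤ s → s ≤ t → t ≤ T → t - s ≤ δ n →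
      excess (C s) (C t) < ENNReal.ofReal (ε n))
    -- nested subdivisions `0 = t^n_0 < … < t^n_{J n} = T` with mesh `≤ δ n`
    (J : ℕ → ℕ) (hJ : ∀ n, 0 < J n)
    (t : ℕ → ℕ → ℝ)
    (ht0 : ∀ n, t n 0 = 0) (htJ : ∀ n, t n (J n) = T)
    (htmono : ∀ n, ∀ j < J n, t n j < t n (j + 1))
    (htmesh : ∀ n, ∀ j < J n, t n (j + 1) - t n j ≤ δ n)
    (hnested : ∀ n, ∀ j ≤ J n, ∃ k ≤ J (n + 1), t (n + 1) k = t n j)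
    -- the catching-up points `y^n_j`
    (Y : ℕ → ℕ → H) (hY0 : ∀ n, Y n 0 = y₀)
    (hYproj : ∀ n, ∀ j : ℕ, 1 ≤ j → j ≤ J n →
      Y n j ∈ projSet (C (t n j)) (Y n (j - 1)))
    -- the right-continuous piecewise-constant interpolants `y_n`
    (yn : ℕ → ℝ → H)
    (hyn0 : ∀ n, yn n 0 = y₀)
    (hynstep : ∀ n, ∀ j : ℕ, 1 ≤ j → j ≤ J n →
      ∀ s ∈ Set.Ico (t n (j - 1)) (t n j), yn n s = Y n (j - 1))
    (hynT : ∀ n, yn n T = Y n (J n))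
    -- uniformly bounded variations
    (hVar : ∃ V : ℝ, ∀ n, eVariationOn (yn n) (Set.Icc 0 T) ≤ ENNReal.ofReal V) :
    ∃ y : ℝ → H, ContinuousOn y (Set.Icc 0 T) ∧
      BoundedVariationOn y (Set.Icc 0 T) ∧ y 0 = y₀ ∧
      (∀ s ∈ Set.Icc (0 : ℝ) T, y s ∈ C s) ∧
      TendstoUniformlyOn yn y Filter.atTop (Set.Icc 0 T) :=
  stmt_16_general r T C hC y₀ hy₀ ε δ hε hεsum hδε J t ht0 htJ htmono htmesh hnested Y hY0 hYproj yn
    hynstep hynT hVar
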